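/- arXiv:2112.01666 — 3 statements merged into one kernel-verified Lean document; each statement's English description precedes it below -/
import Mathlib

section
/- Let 𝒱 be a finite set of N distinct vectors in ℝ³ that is centrally symmetric, i.e., 𝒱 = −𝒱, and with 0 ∉ 𝒱. Then max_{v ∈ 𝒱^N̲} |⟨v⟩|₂² = max_{v ∈ 𝒯} |⟨v⟩|₂², where 𝒯 := {v ∈ 𝒱^N̲ : v_{N+1−i} = −v_i for all i = 1,…,N} is the set of tuples in which each pair of antipodal vectors appears in symmetric positions. -/
noncomputable section

abbrev E3 := EuclideanSpace ℝ (Fin 3)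

def tupleAvg (N : ℕ) (v : Fin N → E3) : E3 :=
  ∑ i : Fin N, (2 * (i : ℝ) + 3 - N) • v i

lemma inner_tupleAvg (N : ℕ) (v : Fin N → E3) (x : E3) :
    (inner ℝ (tupleAvg N v) x : ℝ) = ∑ i : Fin N, (2 * (i : ℝ) + 3 - N) * (inner ℝ (v i) x : ℝ) := by
  rw [tupleAvg, sum_inner]
  exact Finset.sum_congr rfl fun i _ => real_inner_smul_left _ _ _

lemma exists_symm_ge (N : ℕ) (𝒱 : Set E3) (hfin : 𝒱.Finite) (hcard : 𝒱.ncard = N)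
    (hsym : ∀ u : E3, u ∈ 𝒱 ↔ -u ∈ 𝒱) (h0 : (0 : E3) ∉ 𝒱)
    (v : Fin N → E3) (hvinj : Function.Injective v) (hvr : Set.range v = 𝒱) (x : E3) :
    ∃ w : Fin N → E3, Function.Injective w ∧ Set.range w = 𝒱 ∧
      (∀ i : Fin N, w (Fin.rev i) = -w i) ∧
      (inner ℝ (tupleAvg N v) x : ℝ) ≤ (inner ℝ (tupleAvg N w) x : ℝ) := by
  classical
  set L : List E3 := hfin.toFinset.toList with hL
  set g : E3 → ℝ := fun u => (inner ℝ u x : ℝ) with hg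
  set s : E3 → ℝ := fun u => ((L.idxOf (-u) : ℕ) : ℝ) - ((L.idxOf u : ℕ) : ℝ) with hs
  have hmemL : ∀ u ∈ 𝒱, u ∈ L := by
    intro u hu
    exact Finset.mem_toList.mpr (hfin.mem_toFinset.mpr hu)
  have hsneg : ∀ u : E3, s (-u) = -s u := by
    intro u; simp only [hs, neg_neg]; ring
  have hgneg : ∀ u : E3, g (-u) = -g u := by
    intro u; simp only [hg, inner_neg_left]
  have hs0 : ∀ u ∈ 𝒱, s u ≠ 0 := by
    intro u hu hcontra
    have hmu : -u ∈ 𝒱 := (hsym u).mp hu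
    have : ((L.idxOf (-u) : ℕ) : ℝ) = ((L.idxOf u : ℕ) : ℝ) := by
      have := sub_eq_zero.mp hcontra; linarith [this]
    have hidx : L.idxOf (-u) = L.idxOf u := Nat.cast_injective this
    have : -u = u := (List.idxOf_inj (hmemL _ hmu)).mp hidx
    exact h0 (by rwa [(show u = 0 from (smul_eq_zero.mp (show (2:ℝ) • u = 0 by rw [two_smul]; nth_rewrite 1 [← this]; exact neg_add_cancel u)).resolve_left two_ne_zero)] at hu)
  -- the tie-broken key and the sorted arrangement
  set key : Fin N → ℝ ×ₗ ℝ := fun i => toLex (g (v i), s (v i)) with hkey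
  set σ : Equiv.Perm (Fin N) := Tuple.sort key with hσ
  set w₀ : Fin N → E3 := v ∘ σ with hw₀
  have hw₀inj : Function.Injective w₀ := hvinj.comp σ.injective
  have hw₀r : Set.range w₀ = 𝒱 := by
    rw [hw₀, Set.range_comp, Equiv.range_eq_univ, Set.image_univ, hvr]
  have hw₀mem : ∀ i, w₀ i ∈ 𝒱 := fun i => hw₀r ▸ Set.mem_range_self i
  set a : Fin N → ℝ := fun i => g (w₀ i) with ha
  have hkeymono : Monotone (key ∘ σ) := Tuple.monotone_sort key
  have hamono : Monotone a := by
    intro i j hij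
    have h := hkeymono hij
    have h' := (Prod.Lex.toLex_le_toLex (x := (g (v (σ i)), s (v (σ i)))) (y := (g (v (σ j)), s (v (σ j))))).mp h
    rcases h' with h' | ⟨h', _⟩
    · exact le_of_lt h'
    · exact le_of_eq h'
  -- antisymmetry of the sorted values : a (rev i) = - a i
  have hanti : ∀ i, a (Fin.rev i) = -a i := by
    set wt : Fin N → E3 := fun i => -w₀ (Fin.rev i) with hwt
    have hwtmem : ∀ i, wt i ∈ 𝒱 := fun i => (hsym _).mp (hw₀mem (Fin.rev i))
    have hex : ∀ i, ∃ j, w₀ j = wt i := by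
      intro i
      have : wt i ∈ Set.range w₀ := hw₀r ▸ hwtmem i
      exact this
    set τ0 : Fin N → Fin N := fun i => (hex i).choose with hτ0
    have hτ0spec : ∀ i, w₀ (τ0 i) = wt i := fun i => (hex i).choose_spec
    have hτ0inj : Function.Injective τ0 := by
      intro i j hij
      have : wt i = wt j := by rw [← hτ0spec i, ← hτ0spec j, hij]
      have : w₀ (Fin.rev i) = w₀ (Fin.rev j) := by
        have := congrArg Neg.neg this
        simpa [hwt] using this
      exact Fin.rev_inj.mp (hw₀inj this)
    set τ : Equiv.Perm (Fin N) := Equiv.ofBijective τ0 (Finite.injective_iff_bijective.mp hτ0inj) with hτ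
    have haτ : ∀ i, a (τ i) = -a (Fin.rev i) := by
      intro i
      have : a (τ0 i) = g (wt i) := by show g (w₀ (τ0 i)) = g (wt i); rw [hτ0spec i]
      rw [hτ, Equiv.ofBijective_apply, this, hwt]
      simp only [hgneg]; rfl
    have hmonoτ : Monotone (a ∘ τ) := by
      intro i j hij
      simp only [Function.comp_apply, haτ]
      exact neg_le_neg (hamono (Fin.rev_le_rev.mpr hij))
    have := Tuple.unique_monotone (f := a) (σ := τ) (τ := Equiv.refl _) hmonoτ
      (by simpa using hamono)
    intro i
    have h2 := congrFun this i
    simp only [Function.comp_apply, Equiv.refl_apply] at h2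
    rw [← h2, haτ, neg_neg]
  -- the sign predicate
  set P : E3 → Prop := fun u => g u < 0 ∨ (g u = 0 ∧ s u < 0) with hP
  have hPneg : ∀ u ∈ 𝒱, (P (-u) ↔ ¬ P u) := by
    intro u hu
    have hsu := hs0 u hu
    simp only [hP, hgneg, hsneg, neg_lt_zero, neg_eq_zero]
    constructor
    · rintro (h | ⟨h1, h2⟩) (h' | ⟨h1', h2'⟩) <;> linarith
    · intro h
      push_neg at h
      rcases lt_trichotomy (g u) 0 with hg' | hg' | hg'
      · exact absurd hg' (not_lt.mpr h.1)
      · right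
        exact ⟨hg', lt_of_le_of_ne (h.2 hg') (Ne.symm hsu)⟩
      · left; exact hg'
  -- cardinalities
  have hNc : hfin.toFinset.card = N := by
    rw [← Set.ncard_eq_toFinset_card 𝒱 hfin]; exact hcard
  set M : ℕ := (hfin.toFinset.filter P).card with hM
  have hbij : (hfin.toFinset.filter P).card = (hfin.toFinset.filter fun u => ¬ P u).card := by
    refine Finset.card_bij' (fun u _ => -u) (fun u _ => -u) ?_ ?_
      (fun u _ => neg_neg u) (fun u _ => neg_neg u)
    · intro u hu
      rw [Finset.mem_filter] at hu ⊢
      obtain ⟨hu1, hu2⟩ := hu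
      have hu𝒱 : u ∈ 𝒱 := hfin.mem_toFinset.mp hu1
      exact ⟨hfin.mem_toFinset.mpr ((hsym u).mp hu𝒱), fun hc => ((hPneg u hu𝒱).mp hc) hu2⟩
    · intro u hu
      rw [Finset.mem_filter] at hu ⊢
      obtain ⟨hu1, hu2⟩ := hu
      have hu𝒱 : u ∈ 𝒱 := hfin.mem_toFinset.mp hu1
      exact ⟨hfin.mem_toFinset.mpr ((hsym u).mp hu𝒱), (hPneg u hu𝒱).mpr hu2⟩
  have hMM : M + M = N := by
    have htot := Finset.card_filter_add_card_filter_not (s := hfin.toFinset) P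
    omega
  have hcardD : (Finset.univ.filter fun i : Fin N => P (w₀ i)).card = M := by
    rw [hM]
    apply Finset.card_bij (fun i _ => w₀ i)
    · intro i hi
      rw [Finset.mem_filter] at hi ⊢
      exact ⟨hfin.mem_toFinset.mpr (hw₀mem i), hi.2⟩
    · intro i _ j _ hij
      exact hw₀inj hij
    · intro u hu
      rw [Finset.mem_filter] at hu
      obtain ⟨i, hi⟩ : u ∈ Set.range w₀ := hw₀r ▸ hfin.mem_toFinset.mp hu.1
      exact ⟨i, Finset.mem_filter.mpr ⟨Finset.mem_univ i, hi.symm ▸ hu.2⟩, hi⟩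
  -- P is downward closed along the sorted tuple
  have haw : ∀ i, g (w₀ i) = a i := fun _ => rfl
  have hsw : ∀ i, s (v (σ i)) = s (w₀ i) := fun _ => rfl
  have hdc : ∀ i j : Fin N, i ≤ j → P (w₀ j) → P (w₀ i) := by
    intro i j hij hPj
    by_contra hPi
    simp only [hP] at hPi hPj
    push_neg at hPi
    obtain ⟨hPi1, hPi2⟩ := hPi
    have hle := hkeymono hij
    have hle' := (Prod.Lex.toLex_le_toLex (x := (g (v (σ i)), s (v (σ i)))) (y := (g (v (σ j)), s (v (σ j))))).mp hle
    have hai : a i ≤ a j := hamono hij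
    rcases hPj with hgj | ⟨hgj, hsj⟩
    · rw [haw] at hgj hPi1; linarith
    · have hgi : g (w₀ i) = 0 := by rw [haw] at hgj hPi1 ⊢; linarith
      have hsi : 0 ≤ s (w₀ i) := hPi2 hgi
      rcases hle' with h1 | ⟨h1, h2⟩
      · have e1 : g (v (σ i)) = a i := rfl
        have e2 : g (v (σ j)) = a j := rfl
        rw [e1, e2] at h1
        linarith
      · rw [hsw, hsw] at h2
        linarith
  have hiff : ∀ i : Fin N, P (w₀ i) ↔ (i : ℕ) < M := by
    intro i
    constructor
    · intro hPi
      have hsub : Finset.Iic i ⊆ Finset.univ.filter fun j : Fin N => P (w₀ j) := by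
        intro j hj
        exact Finset.mem_filter.mpr ⟨Finset.mem_univ _, hdc j i (Finset.mem_Iic.mp hj) hPi⟩
      have hcle := Finset.card_le_card hsub
      rw [Fin.card_Iic, hcardD] at hcle
      omega
    · intro hiM
      by_contra hPi
      have hsub : (Finset.univ.filter fun j : Fin N => P (w₀ j)) ⊆ Finset.Iio i := by
        intro j hj
        rw [Finset.mem_filter] at hj
        rw [Finset.mem_Iio]
        by_contra hne
        exact hPi (hdc i j (le_of_not_gt hne) hj.2)
      have hcle := Finset.card_le_card hsub
      rw [hcardD, Fin.card_Iio] at hcle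
      omega
  -- the symmetric rearrangement
  set w : Fin N → E3 := fun i => if (i : ℕ) < M then w₀ i else -w₀ (Fin.rev i) with hw
  have hrevM : ∀ i : Fin N, (((Fin.rev i) : Fin N) : ℕ) < M ↔ ¬ ((i : ℕ) < M) := by
    intro i
    have h1 : (i : ℕ) < N := i.isLt
    rw [Fin.val_rev]
    omega
  have hwval : ∀ i : Fin N, (i:ℕ) < M → w i = w₀ i := fun i hi => by
    simp only [hw, if_pos hi]
  have hwval' : ∀ i : Fin N, ¬(i:ℕ) < M → w i = -w₀ (Fin.rev i) := fun i hi => by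
    simp only [hw, if_neg hi]
  have hwsymm : ∀ i : Fin N, w (Fin.rev i) = -w i := by
    intro i
    by_cases hi : (i : ℕ) < M
    · have hri : ¬ (((Fin.rev i) : Fin N) : ℕ) < M := fun h => ((hrevM i).mp h) hi
      rw [hwval' _ hri, hwval i hi, Fin.rev_rev]
    · have hri : (((Fin.rev i) : Fin N) : ℕ) < M := (hrevM i).mpr hi
      rw [hwval _ hri, hwval' i hi, neg_neg]
  have hPwi : ∀ i : Fin N, (i:ℕ) < M → P (w i) := fun i hi => by
    rw [hwval i hi]; exact (hiff i).mpr hi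
  have hPwi' : ∀ i : Fin N, ¬(i:ℕ) < M → ¬ P (w i) := by
    intro i hi
    rw [hwval' i hi]
    have hrev : ((Fin.rev i : Fin N):ℕ) < M := (hrevM i).mpr hi
    have hPrev : P (w₀ (Fin.rev i)) := (hiff _).mpr hrev
    intro hc
    exact ((hPneg _ (hw₀mem (Fin.rev i))).mp hc) hPrev
  have hwmem : ∀ i, w i ∈ 𝒱 := by
    intro i; by_cases hi : (i:ℕ) < M
    · rw [hwval i hi]; exact hw₀mem i
    · rw [hwval' i hi]; exact (hsym _).mp (hw₀mem _)
  have hwinj : Function.Injective w := by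
    intro i j hij
    by_cases hi : (i:ℕ) < M <;> by_cases hj : (j:ℕ) < M
    · rw [hwval i hi, hwval j hj] at hij; exact hw₀inj hij
    · exact absurd (hij ▸ hPwi i hi) (hPwi' j hj)
    · exact absurd (hij.symm ▸ hPwi j hj) (hPwi' i hi)
    · rw [hwval' i hi, hwval' j hj] at hij
      exact Fin.rev_inj.mp (hw₀inj (neg_injective hij))
  have hwr : Set.range w = 𝒱 := by
    apply Set.eq_of_subset_of_subset
    · rintro _ ⟨i, rfl⟩; exact hwmem i
    · intro u hu
      by_cases hPu : P u
      · obtain ⟨i, hi⟩ : u ∈ Set.range w₀ := hw₀r ▸ hu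
        have hiM : (i:ℕ) < M := (hiff i).mp (hi.symm ▸ hPu)
        exact ⟨i, by rw [hwval i hiM, hi]⟩
      · have hmu : -u ∈ 𝒱 := (hsym u).mp hu
        have hPmu : P (-u) := (hPneg u hu).mpr hPu
        obtain ⟨i, hi⟩ : -u ∈ Set.range w₀ := hw₀r ▸ hmu
        have hiM : (i:ℕ) < M := (hiff i).mp (hi.symm ▸ hPmu)
        refine ⟨Fin.rev i, ?_⟩
        have hrm : ¬ ((Fin.rev i : Fin N):ℕ) < M := fun h => ((hrevM i).mp h) hiM
        rw [hwval' _ hrm, Fin.rev_rev, hi, neg_neg]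
  have hgw : ∀ i, g (w i) = a i := by
    intro i
    by_cases hi : (i:ℕ) < M
    · rw [hwval i hi]
    · rw [hwval' i hi, hgneg]
      show -a (Fin.rev i) = a i
      rw [hanti, neg_neg]
  -- conclusion via the rearrangement inequality
  refine ⟨w, hwinj, hwr, hwsymm, ?_⟩
  rw [inner_tupleAvg, inner_tupleAvg]
  have hva : ∀ i : Fin N, (inner ℝ (v i) x : ℝ) = a (σ.symm i) := by
    intro i
    show g (v i) = a (σ.symm i)
    have h2 : a (σ.symm i) = g (v (σ (σ.symm i))) := rfl
    rw [h2, Equiv.apply_symm_apply]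
  have hmv : Monovary (fun i : Fin N => 2*(i:ℝ)+3-(N:ℝ)) a := by
    intro i j hij
    have hij' : i ≤ j := by
      by_contra hc
      exact absurd (hamono (le_of_not_ge hc)) (not_le.mpr hij)
    have hcast : ((i:ℕ):ℝ) ≤ ((j:ℕ):ℝ) := Nat.cast_le.mpr hij'
    simp only []
    linarith
  calc ∑ i : Fin N, (2*(i:ℝ)+3-(N:ℝ)) * (inner ℝ (v i) x : ℝ)
      = ∑ i : Fin N, (2*(i:ℝ)+3-(N:ℝ)) • a (σ.symm i) := by
        refine Finset.sum_congr rfl fun i _ => ?_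
        rw [hva i, smul_eq_mul]
    _ ≤ ∑ i : Fin N, (2*(i:ℝ)+3-(N:ℝ)) • a i :=
        hmv.sum_smul_comp_perm_le_sum_smul (σ := σ.symm)
    _ = ∑ i : Fin N, (2*(i:ℝ)+3-(N:ℝ)) * (inner ℝ (w i) x : ℝ) := by
        refine Finset.sum_congr rfl fun i _ => ?_
        rw [smul_eq_mul, ← hgw i]


theorem central_symmetry_reduction (N : ℕ) (𝒱 : Set E3)
    (hfin : 𝒱.Finite) (hcard : 𝒱.ncard = N)
    (hsym : ∀ u : E3, u ∈ 𝒱 ↔ -u ∈ 𝒱) (h0 : (0 : E3) ∉ 𝒱) :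
    sSup {x : ℝ | ∃ v : Fin N → E3, Function.Injective v ∧ Set.range v = 𝒱 ∧
        x = ‖tupleAvg N v‖ ^ 2} =
    sSup {x : ℝ | ∃ v : Fin N → E3, Function.Injective v ∧ Set.range v = 𝒱 ∧
        (∀ i : Fin N, v (Fin.rev i) = -v i) ∧ x = ‖tupleAvg N v‖ ^ 2} := by
  classical
  set S₁ : Set ℝ := {x : ℝ | ∃ v : Fin N → E3, Function.Injective v ∧ Set.range v = 𝒱 ∧
      x = ‖tupleAvg N v‖ ^ 2} with hS₁
  set S₂ : Set ℝ := {x : ℝ | ∃ v : Fin N → E3, Function.Injective v ∧ Set.range v = 𝒱 ∧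
      (∀ i : Fin N, v (Fin.rev i) = -v i) ∧ x = ‖tupleAvg N v‖ ^ 2} with hS₂
  have hsub : S₂ ⊆ S₁ := by
    rintro y ⟨v, h1, h2, _, h4⟩
    exact ⟨v, h1, h2, h4⟩
  have h1fin : S₁.Finite := by
    have hpi : {v : Fin N → E3 | ∀ i, v i ∈ 𝒱}.Finite := by
      have := Set.Finite.pi (fun _ : Fin N => hfin)
      refine this.subset ?_
      intro f hf
      simp only [Set.mem_pi, Set.mem_univ, forall_true_left]
      exact fun i => hf i
    refine ((hpi.image (fun v => ‖tupleAvg N v‖ ^ 2))).subset ?_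
    rintro y ⟨v, h1, h2, h4⟩
    exact ⟨v, fun i => h2 ▸ Set.mem_range_self i, h4.symm⟩
  have h2fin : S₂.Finite := h1fin.subset hsub
  -- an initial arrangement
  have hNc : hfin.toFinset.card = N := by
    rw [← Set.ncard_eq_toFinset_card 𝒱 hfin]; exact hcard
  obtain ⟨v₀, hv₀inj, hv₀r⟩ : ∃ v : Fin N → E3, Function.Injective v ∧ Set.range v = 𝒱 := by
    set e := hfin.toFinset.equivFin with he
    refine ⟨fun i => (e.symm (Fin.cast hNc.symm i) : E3), ?_, ?_⟩
    · intro i j hij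
      have := e.symm.injective (Subtype.ext hij)
      exact Fin.cast_injective _ this
    · apply Set.eq_of_subset_of_subset
      · rintro _ ⟨i, rfl⟩
        exact hfin.mem_toFinset.mp (e.symm (Fin.cast hNc.symm i)).2
      · intro u hu
        refine ⟨Fin.cast hNc (e ⟨u, hfin.mem_toFinset.mpr hu⟩), ?_⟩
        simp
  obtain ⟨w₁, hw₁inj, hw₁r, hw₁s, _⟩ :=
    exists_symm_ge N 𝒱 hfin hcard hsym h0 v₀ hv₀inj hv₀r 0
  have hne2 : S₂.Nonempty := ⟨‖tupleAvg N w₁‖ ^ 2, w₁, hw₁inj, hw₁r, hw₁s, rfl⟩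
  have hne1 : S₁.Nonempty := hne2.mono hsub
  apply le_antisymm
  · -- sSup S₁ ≤ sSup S₂
    have hmem := hne1.csSup_mem h1fin
    obtain ⟨v, hvinj, hvr, hveq⟩ := hmem
    obtain ⟨w, hwinj, hwr, hws, hwge⟩ :=
      exists_symm_ge N 𝒱 hfin hcard hsym h0 v hvinj hvr (tupleAvg N v)
    have hcs : (inner ℝ (tupleAvg N w) (tupleAvg N v) : ℝ) ≤ ‖tupleAvg N w‖ * ‖tupleAvg N v‖ :=
      real_inner_le_norm _ _
    have hself : (inner ℝ (tupleAvg N v) (tupleAvg N v) : ℝ) = ‖tupleAvg N v‖ ^ 2 :=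
      real_inner_self_eq_norm_sq _
    have hle : ‖tupleAvg N v‖ ^ 2 ≤ ‖tupleAvg N w‖ ^ 2 := by
      nlinarith [norm_nonneg (tupleAvg N v), norm_nonneg (tupleAvg N w),
        sq_nonneg (‖tupleAvg N w‖ - ‖tupleAvg N v‖)]
    calc sSup S₁ = ‖tupleAvg N v‖ ^ 2 := hveq
      _ ≤ ‖tupleAvg N w‖ ^ 2 := hle
      _ ≤ sSup S₂ := le_csSup h2fin.bddAbove ⟨w, hwinj, hwr, hws, rfl⟩
  · exact csSup_le_csSup h1fin.bddAbove hne2 hsub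
end
end

section
/- Let 𝒱 be a finite set of N distinct vectors in ℝ³ that is vertex transitive. Then for every w ∈ 𝒱, max_{v ∈ 𝒱^N̲} |⟨v⟩|₂² = max_{v ∈ 𝒯_w} |⟨v⟩|₂², where 𝒯_w := {v ∈ 𝒱^N̲ : v_N = w} is the set of tuples whose last entry is w. -/
/-! Orthogonal maps commute with `tupleAvg` and preserve norms, so composing an enumeration of
`𝒱` with a symmetry of `𝒱` sending its last entry to `w` yields an enumeration ending in `w` with
the same value of `‖⟨v⟩‖²`. Hence both sets of values coincide. -/

noncomputable section

lemma tupleAvg_comp_linearMap (N : ℕ) (f : E3 →ₗ[ℝ] E3) (v : Fin N → E3) :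
    tupleAvg N (f ∘ v) = f (tupleAvg N v) := by
  simp [tupleAvg, map_sum, map_smul]

lemma norm_tupleAvg_comp_linearIsometryEquiv (N : ℕ) (O : E3 ≃ₗᵢ[ℝ] E3) (v : Fin N → E3) :
    ‖tupleAvg N (O ∘ v)‖ = ‖tupleAvg N v‖ := by
  rw [← O.norm_map (tupleAvg N v)]
  exact congrArg norm (tupleAvg_comp_linearMap N O.toLinearEquiv.toLinearMap v)

lemma Set.range_comp_eq_of_image_eq {ι α : Type*} {f : α → α} {s : Set α}
    (hf : f '' s = s) {v : ι → α} (hv : Set.range v = s) : Set.range (f ∘ v) = s := by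
  rw [Set.range_comp, hv, hf]

theorem vertex_transitivity_reduction_general (N : ℕ) (hN : 0 < N) (𝒱 : Set E3)
    (htrans : ∀ u ∈ 𝒱, ∀ w ∈ 𝒱, ∃ O : E3 ≃ₗᵢ[ℝ] E3, O '' 𝒱 = 𝒱 ∧ O u = w) :
    ∀ w ∈ 𝒱,
      sSup {x : ℝ | ∃ v : Fin N → E3, Function.Injective v ∧ Set.range v = 𝒱 ∧
          x = ‖tupleAvg N v‖ ^ 2} =
      sSup {x : ℝ | ∃ v : Fin N → E3, Function.Injective v ∧ Set.range v = 𝒱 ∧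
          v ⟨N - 1, Nat.sub_lt hN one_pos⟩ = w ∧ x = ‖tupleAvg N v‖ ^ 2} := by
  intro w hw
  congr 1
  refine Set.Subset.antisymm ?_ fun x ⟨v, hinj, hrange, _, hx⟩ => ⟨v, hinj, hrange, hx⟩
  rintro _ ⟨v, hinj, hrange, rfl⟩
  obtain ⟨O, hO𝒱, hOv⟩ := htrans _ (hrange ▸ Set.mem_range_self _) w hw
  exact ⟨O ∘ v, O.injective.comp hinj, Set.range_comp_eq_of_image_eq hO𝒱 hrange,
    hOv, by rw [norm_tupleAvg_comp_linearIsometryEquiv]⟩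

theorem vertex_transitivity_reduction (N : ℕ) (hN : 0 < N) (𝒱 : Set E3)
    (hfin : 𝒱.Finite) (hcard : 𝒱.ncard = N)
    (htrans : ∀ u ∈ 𝒱, ∀ w ∈ 𝒱, ∃ O : E3 ≃ₗᵢ[ℝ] E3, O '' 𝒱 = 𝒱 ∧ O u = w) :
    ∀ w ∈ 𝒱,
      sSup {x : ℝ | ∃ v : Fin N → E3, Function.Injective v ∧ Set.range v = 𝒱 ∧
          x = ‖tupleAvg N v‖ ^ 2} =
      sSup {x : ℝ | ∃ v : Fin N → E3, Function.Injective v ∧ Set.range v = 𝒱 ∧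
          v ⟨N - 1, Nat.sub_lt hN one_pos⟩ = w ∧ x = ‖tupleAvg N v‖ ^ 2} :=
  vertex_transitivity_reduction_general N hN 𝒱 htrans
end
end

section
/- Let 𝒱 be a finite set of N distinct vectors in ℝ³ that is both centrally symmetric (𝒱 = −𝒱, with 0 ∉ 𝒱) and vertex transitive. Then for every w ∈ 𝒱, max_{v ∈ 𝒱^N̲} |⟨v⟩|₂² = max_{v ∈ 𝒯 ∩ 𝒯_w} |⟨v⟩|₂², where 𝒯 := {v ∈ 𝒱^N̲ : v_{N+1−i} = −v_i for all i} and 𝒯_w := {v ∈ 𝒱^N̲ : v_N = w}. -/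
noncomputable section

open Finset in
lemma lex_neg_aux {β : Type*} [LinearOrder β] (n : β → β)
    (hn : ∀ p q : β, p < q → n q < n p) :
    ∀ p q : ℝ × β, toLex p < toLex q → toLex (-q.1, n q.2) < toLex (-p.1, n p.2) := by
  intro p q h
  rw [Prod.Lex.lt_iff] at h ⊢
  rcases h with h | ⟨h1, h2⟩
  · exact Or.inl (by simpa using h)
  · exact Or.inr ⟨by simp only [ofLex_toLex] at h1 ⊢; rw [h1], hn _ _ h2⟩

lemma exists_sorted (N : ℕ) (𝒱 : Set E3) (hfin : 𝒱.Finite) (hcard : 𝒱.ncard = N)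
    (hsym : ∀ u : E3, u ∈ 𝒱 ↔ -u ∈ 𝒱) (a : E3) :
    ∃ u : Fin N → E3, Function.Injective u ∧ Set.range u = 𝒱 ∧
      (∀ i, u (Fin.rev i) = -u i) ∧
      Monotone (fun i => (inner ℝ a (u i) : ℝ)) := by
  classical
  set K : E3 → ℝ ×ₗ (ℝ ×ₗ (ℝ ×ₗ ℝ)) :=
    fun x => toLex ((inner ℝ a x : ℝ), toLex (x 0, toLex (x 1, x 2))) with hK
  have Kinj : Function.Injective K := by
    intro x y h
    have h1 := toLex.injective h
    have e1 := congrArg Prod.snd h1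
    have h2 := toLex.injective e1
    have f1 : x 0 = y 0 := congrArg Prod.fst h2
    have e2 := congrArg Prod.snd h2
    have h3 := toLex.injective e2
    have f2 : x 1 = y 1 := congrArg Prod.fst h3
    have f3 : x 2 = y 2 := congrArg Prod.snd h3
    ext i
    fin_cases i <;> assumption
  have hKneg : ∀ x y : E3, K x < K y → K (-y) < K (-x) := by
    intro x y h
    have base : ∀ p q : ℝ ×ₗ ℝ, p < q →
        toLex (-(ofLex q).1, -(ofLex q).2) < toLex (-(ofLex p).1, -(ofLex p).2) := by
      intro p q hpq
      exact lex_neg_aux (fun t => -t) (fun p q h => neg_lt_neg h) (ofLex p) (ofLex q) hpq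
    have step2 : ∀ p q : ℝ ×ₗ (ℝ ×ₗ ℝ), p < q →
        toLex (-(ofLex q).1, toLex (-(ofLex (ofLex q).2).1, -(ofLex (ofLex q).2).2)) <
        toLex (-(ofLex p).1, toLex (-(ofLex (ofLex p).2).1, -(ofLex (ofLex p).2).2)) := by
      intro p q hpq
      exact lex_neg_aux (fun t => toLex (-(ofLex t).1, -(ofLex t).2)) base (ofLex p) (ofLex q) hpq
    have step3 := lex_neg_aux
      (fun t : ℝ ×ₗ (ℝ ×ₗ ℝ) =>
        toLex (-(ofLex t).1, toLex (-(ofLex (ofLex t).2).1, -(ofLex (ofLex t).2).2))) step2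
      (ofLex (K x)) (ofLex (K y)) h
    have hnx : ∀ z : E3, K (-z) = toLex (-(inner ℝ a z : ℝ), toLex (-(z 0), toLex (-(z 1), -(z 2)))) := by
      intro z
      simp [hK, inner_neg_right]
    rw [hnx, hnx]
    exact step3
  letI : LinearOrder E3 := LinearOrder.lift' K Kinj
  have hlt : ∀ x y : E3, x < y ↔ K x < K y := by
    intro x y
    constructor
    · intro h
      rcases lt_iff_le_not_ge.mp h with ⟨h1, h2⟩
      exact lt_iff_le_not_ge.mpr ⟨h1, h2⟩
    · intro h
      exact lt_iff_le_not_ge.mpr ⟨le_of_lt h, fun hc => absurd hc (not_le_of_gt h)⟩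
  set s : Finset E3 := hfin.toFinset with hs
  have hscard : s.card = N := by
    rw [hs, ← hcard, Set.ncard_eq_toFinset_card _ hfin]
  set u : Fin N → E3 := fun i => s.orderEmbOfFin hscard i with hu
  have hustrict : StrictMono u := (s.orderEmbOfFin hscard).strictMono
  have huinj : Function.Injective u := hustrict.injective
  have hurange : Set.range u = 𝒱 := by
    rw [hu]
    have := Finset.range_orderEmbOfFin s hscard
    rw [show (fun i => s.orderEmbOfFin hscard i) = ⇑(s.orderEmbOfFin hscard) from rfl, this, hs]
    exact hfin.coe_toFinset
  have hmem : ∀ i, u i ∈ 𝒱 := fun i => hurange ▸ Set.mem_range_self i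
  have hanti : ∀ i, u (Fin.rev i) = -u i := by
    have hg : (fun i => -u (Fin.rev i)) = u := by
      apply Finset.orderEmbOfFin_unique hscard
      · intro i
        rw [hs, Set.Finite.mem_toFinset]
        exact (hsym _).mp (hmem _)
      · intro i j hij
        have : Fin.rev j < Fin.rev i := Fin.rev_lt_rev.mpr hij
        have h2 : u (Fin.rev j) < u (Fin.rev i) := hustrict this
        rw [hlt] at h2 ⊢
        exact hKneg _ _ h2
    intro i
    have := congrFun hg i
    rw [← this]
    simp
  refine ⟨u, huinj, hurange, hanti, ?_⟩
  intro i j hij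
  rcases eq_or_lt_of_le hij with rfl | hij
  · exact le_rfl
  · have := hustrict hij
    rw [hlt, hK] at this
    rw [Prod.Lex.lt_iff] at this
    rcases this with h | ⟨h1, _⟩
    · exact le_of_lt (by simpa using h)
    · simp only [Prod.mk.injEq] at h1 ⊢
      exact le_of_eq h1

lemma exists_perm {N : ℕ} {𝒱 : Set E3} {u v : Fin N → E3}
    (hui : Function.Injective u) (hur : Set.range u = 𝒱)
    (hvi : Function.Injective v) (hvr : Set.range v = 𝒱) :
    ∃ σ : Equiv.Perm (Fin N), ∀ i, v i = u (σ i) := by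
  have hmem : ∀ i, v i ∈ Set.range u := by
    intro i; rw [hur, ← hvr]; exact Set.mem_range_self i
  choose σ hσ using fun i => hmem i
  have hσinj : Function.Injective σ := by
    intro i j h
    have : v i = v j := by rw [← hσ i, ← hσ j, h]
    exact hvi this
  have hbij : Function.Bijective σ := Finite.injective_iff_bijective.mp hσinj
  exact ⟨Equiv.ofBijective σ hbij, fun i => (hσ i).symm⟩


theorem central_symmetry_and_vertex_transitivity_reduction
    (N : ℕ) (hN : 0 < N) (𝒱 : Set E3)
    (hfin : 𝒱.Finite) (hcard : 𝒱.ncard = N)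
    (hsym : ∀ u : E3, u ∈ 𝒱 ↔ -u ∈ 𝒱) (h0 : (0 : E3) ∉ 𝒱)
    (htrans : ∀ u ∈ 𝒱, ∀ w ∈ 𝒱, ∃ O : E3 ≃ₗᵢ[ℝ] E3, O '' 𝒱 = 𝒱 ∧ O u = w) :
    ∀ w ∈ 𝒱,
      sSup {x : ℝ | ∃ v : Fin N → E3, Function.Injective v ∧ Set.range v = 𝒱 ∧
          x = ‖tupleAvg N v‖ ^ 2} =
      sSup {x : ℝ | ∃ v : Fin N → E3, Function.Injective v ∧ Set.range v = 𝒱 ∧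
          (∀ i : Fin N, v (Fin.rev i) = -v i) ∧
          v ⟨N - 1, Nat.sub_lt hN one_pos⟩ = w ∧ x = ‖tupleAvg N v‖ ^ 2} := by
  intro w hw
  classical
  set A : Set ℝ := {x : ℝ | ∃ v : Fin N → E3, Function.Injective v ∧ Set.range v = 𝒱 ∧
      x = ‖tupleAvg N v‖ ^ 2} with hA
  set B : Set ℝ := {x : ℝ | ∃ v : Fin N → E3, Function.Injective v ∧ Set.range v = 𝒱 ∧
      (∀ i : Fin N, v (Fin.rev i) = -v i) ∧
      v ⟨N - 1, Nat.sub_lt hN one_pos⟩ = w ∧ x = ‖tupleAvg N v‖ ^ 2} with hB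
  have hBsubA : B ⊆ A := by
    rintro x ⟨v, h1, h2, _, _, h5⟩
    exact ⟨v, h1, h2, h5⟩
  -- A is finite
  have hT : ({v : Fin N → E3 | ∀ i, v i ∈ 𝒱}).Finite := by
    have := Set.Finite.pi (fun _ : Fin N => hfin)
    apply this.subset
    intro v hv
    exact fun i _ => hv i
  have hAfin : A.Finite := by
    apply (hT.image (fun v => ‖tupleAvg N v‖ ^ 2)).subset
    rintro x ⟨v, _, h2, h3⟩
    exact ⟨v, fun i => h2 ▸ Set.mem_range_self i, h3.symm⟩
  -- A is nonempty
  obtain ⟨u0, hu0i, hu0r, _, _⟩ := exists_sorted N 𝒱 hfin hcard hsym 0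
  have hAne : A.Nonempty := ⟨_, u0, hu0i, hu0r, rfl⟩
  have hbddA : BddAbove A := hAfin.bddAbove
  set M : ℝ := sSup A with hM
  have hMA : M ∈ A := hAne.csSup_mem hAfin
  obtain ⟨v0, hv0i, hv0r, hv0M⟩ := hMA
  set a : E3 := tupleAvg N v0 with ha
  -- sorted antisymmetric tuple
  obtain ⟨u, hui, hur, hanti, hmono⟩ := exists_sorted N 𝒱 hfin hcard hsym a
  -- coefficients
  set c : Fin N → ℝ := fun i => 2 * (i : ℝ) + 3 - N with hc
  have hcmono : Monotone c := by
    intro i j hij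
    have : ((i : ℕ) : ℝ) ≤ ((j : ℕ) : ℝ) := by exact_mod_cast (hij : (i : ℕ) ≤ (j : ℕ))
    simp only [hc]
    linarith
  have hinner : ∀ v : Fin N → E3, (inner ℝ a (tupleAvg N v) : ℝ) = ∑ i, c i * inner ℝ a (v i) := by
    intro v
    simp only [tupleAvg, inner_sum, real_inner_smul_right, hc]
  -- rearrangement
  have hrearr : (inner ℝ a a : ℝ) ≤ inner ℝ a (tupleAvg N u) := by
    obtain ⟨σ, hσ⟩ := exists_perm hui hur hv0i hv0r
    have hmv : Monovary c (fun i => (inner ℝ a (u i) : ℝ)) := by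
      intro i j h
      apply hcmono
      by_contra hle
      exact absurd (hmono (le_of_not_ge hle)) (not_le_of_gt h)
    have := hmv.sum_mul_comp_perm_le_sum_mul (σ := σ)
    calc (inner ℝ a a : ℝ) = ∑ i, c i * inner ℝ a (v0 i) := hinner v0
      _ = ∑ i, c i * inner ℝ a (u (σ i)) := by simp_rw [fun i => hσ i]
      _ ≤ ∑ i, c i * inner ℝ a (u i) := this
      _ = inner ℝ a (tupleAvg N u) := (hinner u).symm
  -- the sorted tuple attains the max
  have huA : ‖tupleAvg N u‖ ^ 2 ∈ A := ⟨u, hui, hur, rfl⟩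
  have huleM : ‖tupleAvg N u‖ ^ 2 ≤ M := le_csSup hbddA huA
  have huM : ‖tupleAvg N u‖ ^ 2 = M := by
    have hcs : (inner ℝ a (tupleAvg N u) : ℝ) ≤ ‖a‖ * ‖tupleAvg N u‖ := real_inner_le_norm _ _
    have haa : (inner ℝ a a : ℝ) = ‖a‖ ^ 2 := real_inner_self_eq_norm_sq a
    have hMa : M = ‖a‖ ^ 2 := hv0M
    have h1 : ‖a‖ ^ 2 ≤ ‖a‖ * ‖tupleAvg N u‖ := by linarith [hrearr]
    have h2 : (0:ℝ) ≤ ‖a‖ := norm_nonneg _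
    have h3 : (0:ℝ) ≤ ‖tupleAvg N u‖ := norm_nonneg _
    nlinarith [huleM]
  -- apply vertex transitivity
  have hlast : u ⟨N - 1, Nat.sub_lt hN one_pos⟩ ∈ 𝒱 := hur ▸ Set.mem_range_self _
  obtain ⟨O, hO1, hO2⟩ := htrans _ hlast w hw
  set v1 : Fin N → E3 := fun i => O (u i) with hv1
  have hv1avg : tupleAvg N v1 = O (tupleAvg N u) := by
    simp [tupleAvg, hv1, map_sum, map_smul]
  have hMB : M ∈ B := by
    refine ⟨v1, O.injective.comp hui, ?_, ?_, hO2, ?_⟩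
    · have : Set.range v1 = O '' Set.range u := Set.range_comp O u
      rw [this, hur, hO1]
    · intro i
      rw [hv1]
      simp only
      rw [hanti i, map_neg]
    · rw [hv1avg, O.norm_map, huM]
  have hbddB : BddAbove B := hAfin.subset hBsubA |>.bddAbove
  apply le_antisymm
  · exact le_csSup hbddB hMB
  · exact csSup_le_csSup hbddA ⟨M, hMB⟩ hBsubA
end
end
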